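/- There exists ε ∈ (0, 1) such that for all real M > 0 and Q with |Q| ≤ εM, and for every r with r₊(M,Q) ≤ r ≤ r_P(M,Q), one has 6r⁴ − 30Mr³ + (32M² + 40Q²)r² − 90MQ²r + 42Q⁴ ≤ 0. Equivalently, on that interval 2(r² − 3Mr + 2Q²)/r⁵ − (1/2)·d/dr( Υ(r)·V₁(r) ) ≤ 0. -/

import Mathlib

noncomputable section

/-- The Reissner–Nordström lapse function `Υ(r) = 1 - 2M/r + Q²/r²`. -/
def Upsilon (M Q r : ℝ) : ℝ := 1 - 2*M/r + Q^2/r^2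

/-- The event horizon radius `r₊ = M + √(M² - Q²)`. -/
def rplus (M Q : ℝ) : ℝ := M + Real.sqrt (M^2 - Q^2)

/-- The photon-sphere radius `r_P = (3M + √(9M² - 8Q²))/2`. -/
def rP (M Q : ℝ) : ℝ := (3*M + Real.sqrt (9*M^2 - 8*Q^2)) / 2

/-- The Regge–Wheeler potential `V₁(r) = r⁻²(4 - 8M/r + 14Q²/r²)`. -/
def V1 (M Q r : ℝ) : ℝ := (1 / r^2) * (4 - 8*M/r + 14*Q^2/r^2)

/-!
With `|Q| ≤ M/10` the interval `[r₊, r_P]` lies inside `[1.9 M, 3 M]`. There the charge-free part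
`2r²(3r² - 15Mr + 16M²)` of the quartic is at most `-2M²r²`, since `3x² - 15x + 16` has its roots
near `1.54` and `3.46`, while the charge terms are of size `O(Q²)` and cannot compensate. The
second claim follows, its left-hand side being the quartic divided by `r⁷`.
-/

def quarticV1 (M Q r : ℝ) : ℝ :=
  6*r^4 - 30*M*r^3 + (32*M^2 + 40*Q^2)*r^2 - 90*M*Q^2*r + 42*Q^4

section

variable {M Q r : ℝ}

theorem hasDerivAt_Upsilon (hr : r ≠ 0) :
    HasDerivAt (Upsilon M Q) (2*M/r^2 - 2*Q^2/r^3) r := by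
  refine (((hasDerivAt_const r 1).fun_sub
    ((hasDerivAt_const r (2*M)).fun_div (hasDerivAt_id' r) hr)).fun_add
    ((hasDerivAt_const r (Q^2)).fun_div (hasDerivAt_pow 2 r) (pow_ne_zero 2 hr))).congr_deriv ?_
  field_simp
  ring

theorem hasDerivAt_V1 (hr : r ≠ 0) :
    HasDerivAt (V1 M Q) (-8/r^3 + 24*M/r^4 - 56*Q^2/r^5) r := by
  refine (((hasDerivAt_const r 1).fun_div (hasDerivAt_pow 2 r) (pow_ne_zero 2 hr)).fun_mul
    (((hasDerivAt_const r 4).fun_sub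
      ((hasDerivAt_const r (8*M)).fun_div (hasDerivAt_id' r) hr)).fun_add
    ((hasDerivAt_const r (14*Q^2)).fun_div (hasDerivAt_pow 2 r) (pow_ne_zero 2 hr)))).congr_deriv ?_
  field_simp
  ring

theorem sub_half_deriv_Upsilon_mul_V1 (hr : r ≠ 0) :
    2*(r^2 - 3*M*r + 2*Q^2) / r^5 - (1/2) * deriv (fun s => Upsilon M Q s * V1 M Q s) r
      = quarticV1 M Q r / r^7 := by
  rw [((hasDerivAt_Upsilon hr).fun_mul (hasDerivAt_V1 hr)).deriv, Upsilon, V1, quarticV1]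
  field_simp
  ring

theorem mul_le_rplus {a : ℝ} (hQ : Q^2 ≤ (1 - a^2) * M^2) :
    (1 + a) * M ≤ rplus M Q := by
  have : a * M ≤ Real.sqrt (M^2 - Q^2) :=
    Real.le_sqrt_of_sq_le (by linarith)
  rw [rplus]
  linarith

theorem rP_le (hM : 0 ≤ M) : rP M Q ≤ 3 * M := by
  have : Real.sqrt (9*M^2 - 8*Q^2) ≤ 3 * M :=
    Real.sqrt_le_iff.2 ⟨by positivity, by nlinarith [sq_nonneg Q]⟩
  rw [rP]
  linarith

theorem quarticV1_nonpos (hM : 0 < M) (hQ : 100 * Q^2 ≤ M^2) (hr₁ : 19*M ≤ 10*r)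
    (hr₂ : r ≤ 3*M) : quarticV1 M Q r ≤ 0 := by
  have hr : 0 < r := by linarith
  have hneutral : 3*r^2 - 15*M*r + 16*M^2 ≤ -M^2 := by
    nlinarith [mul_nonneg (sub_nonneg.2 hr₁) (sub_nonneg.2 hr₂)]
  have hcharge : 10*Q^2*r*(4*r - 9*M) ≤ 30*M*Q^2*r := by
    nlinarith [mul_nonneg (sq_nonneg Q) hr.le]
  calc quarticV1 M Q r
      = 2*r^2*(3*r^2 - 15*M*r + 16*M^2) + 10*Q^2*r*(4*r - 9*M) + 42*Q^4 := by
        rw [quarticV1]; ring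
    _ ≤ -2*M^2*r^2 + 30*M*Q^2*r + 42*Q^4 := by nlinarith [sq_nonneg r]
    _ ≤ -2*M^2*r^2 + 3/10*M^3*r + 42/10000*M^4 := by
        nlinarith [mul_pos hM hr, sq_nonneg Q]
    _ ≤ 0 := by nlinarith [mul_pos hM hr, sq_nonneg M]

end

theorem quartic_V1_nonpos_small_charge :
    ∃ ε : ℝ, 0 < ε ∧ ε < 1 ∧
      ∀ M Q : ℝ, 0 < M → |Q| ≤ ε * M →
        ∀ r : ℝ, rplus M Q ≤ r → r ≤ rP M Q →
          (6*r^4 - 30*M*r^3 + (32*M^2 + 40*Q^2)*r^2 - 90*M*Q^2*r + 42*Q^4 ≤ 0) ∧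
          (2*(r^2 - 3*M*r + 2*Q^2) / r^5
            - (1/2) * deriv (fun s => Upsilon M Q s * V1 M Q s) r ≤ 0) := by
  refine ⟨1/10, by norm_num, by norm_num, fun M Q hM hQ r hr₁ hr₂ => ?_⟩
  have hQ_sq : 100 * Q^2 ≤ M^2 := by
    nlinarith [sq_abs Q, pow_le_pow_left₀ (abs_nonneg Q) hQ 2]
  have hr_lower : (1 + 9/10) * M ≤ r := (mul_le_rplus (by norm_num; linarith [sq_nonneg M])).trans hr₁
  have hquartic := quarticV1_nonpos (r := r) hM hQ_sq (by linarith) (hr₂.trans (rP_le hM.le))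
  have hr : 0 < r := by linarith
  refine ⟨hquartic, ?_⟩
  rw [sub_half_deriv_Upsilon_mul_V1 hr.ne']
  exact div_nonpos_of_nonpos_of_nonneg hquartic (by positivity)
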